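/- Let u be an infinite binary word coding a two-interval exchange with parameters ℓ_0, ℓ_1 > 0 and initial point ρ (lower version, intervals [0,ℓ_0) and [ℓ_0,ℓ_0+ℓ_1)). Then φ_b(u) codes the two-interval exchange with parameters ℓ_0+ℓ_1, ℓ_1 and initial point ρ (intervals [0,ℓ_0+ℓ_1) and [ℓ_0+ℓ_1, ℓ_0+2ℓ_1)). -/
import Mathlib


/-- φ_b: 0↦0, 1↦01 (false = 0, true = 1). -/
def phiB : Bool → List Bool
  | false => [false]
  | true => [false, true]

/-- Apply a nonerasing morphism to an infinite word, letter by letter. -/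
def imw (f : Bool → List Bool) (u : ℕ → Bool) : ℕ → Bool :=
  fun n => (((List.range (n + 1)).map u).flatMap f).getD n false

/-- The (lower) two-interval exchange with parameters ℓ₀, ℓ₁. -/
noncomputable def iet (ℓ₀ ℓ₁ : ℝ) : ℝ → ℝ :=
  fun x => if x < ℓ₀ then x + ℓ₁ else x - ℓ₀

/-- The coding of the orbit of ρ under the two-interval exchange:
`false` iff the n-th iterate lies in [0, ℓ₀). -/
noncomputable def ietCoding (ℓ₀ ℓ₁ ρ : ℝ) : ℕ → Bool :=
  fun n => if (iet ℓ₀ ℓ₁)^[n] ρ < ℓ₀ then false else true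

lemma iet_apply (ℓ₀ ℓ₁ x : ℝ) : iet ℓ₀ ℓ₁ x = if x < ℓ₀ then x + ℓ₁ else x - ℓ₀ := rfl

/-- Auxiliary: the list image of the first `k` letters under `phiB`. -/
noncomputable def auxL (ℓ₀ ℓ₁ ρ : ℝ) (k : ℕ) : List Bool :=
  ((List.range k).map (ietCoding ℓ₀ ℓ₁ ρ)).flatMap phiB

lemma auxL_succ (ℓ₀ ℓ₁ ρ : ℝ) (k : ℕ) :
    auxL ℓ₀ ℓ₁ ρ (k + 1) = auxL ℓ₀ ℓ₁ ρ k ++ phiB (ietCoding ℓ₀ ℓ₁ ρ k) := by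
  simp [auxL, List.range_succ]

lemma auxL_prefix (ℓ₀ ℓ₁ ρ : ℝ) (a b : ℕ) :
    ∃ t, auxL ℓ₀ ℓ₁ ρ (a + b) = auxL ℓ₀ ℓ₁ ρ a ++ t := by
  induction b with
  | zero => exact ⟨[], by simp⟩
  | succ b ih =>
    obtain ⟨t, ht⟩ := ih
    exact ⟨t ++ phiB (ietCoding ℓ₀ ℓ₁ ρ (a + b)),
      by rw [← Nat.add_assoc, auxL_succ, ht, List.append_assoc]⟩

lemma phiB_len_pos (b : Bool) : 0 < (phiB b).length := by cases b <;> simp [phiB]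

lemma auxL_len_lt (ℓ₀ ℓ₁ ρ : ℝ) (k : ℕ) :
    (auxL ℓ₀ ℓ₁ ρ k).length < (auxL ℓ₀ ℓ₁ ρ (k + 1)).length := by
  rw [auxL_succ, List.length_append]
  have := phiB_len_pos (ietCoding ℓ₀ ℓ₁ ρ k)
  omega

lemma auxL_len_ge (ℓ₀ ℓ₁ ρ : ℝ) (k : ℕ) : k ≤ (auxL ℓ₀ ℓ₁ ρ k).length := by
  induction k with
  | zero => simp
  | succ k ih => have := auxL_len_lt ℓ₀ ℓ₁ ρ k; omega

lemma iet_orbit_mem (ℓ₀ ℓ₁ : ℝ) (h₀ : 0 < ℓ₀) (h₁ : 0 < ℓ₁) (ρ : ℝ)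
    (hρ0 : 0 ≤ ρ) (hρ1 : ρ < ℓ₀ + ℓ₁) (k : ℕ) :
    0 ≤ (iet ℓ₀ ℓ₁)^[k] ρ ∧ (iet ℓ₀ ℓ₁)^[k] ρ < ℓ₀ + ℓ₁ := by
  induction k with
  | zero => exact ⟨hρ0, hρ1⟩
  | succ k ih =>
    rw [Function.iterate_succ_apply']
    obtain ⟨ha, hb⟩ := ih
    set x := (iet ℓ₀ ℓ₁)^[k] ρ with hx
    rw [iet_apply]
    split_ifs with h
    · constructor <;> linarith
    · constructor <;> linarith

lemma iterate_sync (ℓ₀ ℓ₁ : ℝ) (h₀ : 0 < ℓ₀) (h₁ : 0 < ℓ₁) (ρ : ℝ)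
    (hρ0 : 0 ≤ ρ) (hρ1 : ρ < ℓ₀ + ℓ₁) (k : ℕ) :
    (iet (ℓ₀ + ℓ₁) ℓ₁)^[(auxL ℓ₀ ℓ₁ ρ k).length] ρ = (iet ℓ₀ ℓ₁)^[k] ρ := by
  induction k with
  | zero => simp [auxL]
  | succ k ih =>
    obtain ⟨ha, hb⟩ := iet_orbit_mem ℓ₀ ℓ₁ h₀ h₁ ρ hρ0 hρ1 k
    rw [auxL_succ, List.length_append, Function.iterate_succ_apply']
    by_cases h : (iet ℓ₀ ℓ₁)^[k] ρ < ℓ₀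
    · have huk : ietCoding ℓ₀ ℓ₁ ρ k = false := by simp [ietCoding, h]
      rw [huk]
      show (iet (ℓ₀ + ℓ₁) ℓ₁)^[(auxL ℓ₀ ℓ₁ ρ k).length + 1] ρ = _
      rw [Function.iterate_succ_apply', ih]
      set x := (iet ℓ₀ ℓ₁)^[k] ρ with hx
      rw [iet_apply, iet_apply, if_pos (by linarith), if_pos h]
    · have huk : ietCoding ℓ₀ ℓ₁ ρ k = true := by simp [ietCoding, h]
      rw [huk]
      show (iet (ℓ₀ + ℓ₁) ℓ₁)^[(auxL ℓ₀ ℓ₁ ρ k).length + 2] ρ = _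
      have h2 : (auxL ℓ₀ ℓ₁ ρ k).length + 2 = ((auxL ℓ₀ ℓ₁ ρ k).length + 1) + 1 := rfl
      rw [h2, Function.iterate_succ_apply', Function.iterate_succ_apply', ih]
      set x := (iet ℓ₀ ℓ₁)^[k] ρ with hx
      rw [iet_apply ℓ₀ ℓ₁ x, if_neg h, iet_apply (ℓ₀ + ℓ₁) ℓ₁ x, if_pos (by linarith),
        iet_apply, if_neg (by push_neg; linarith)]
      ring

lemma exists_block (ℓ₀ ℓ₁ ρ : ℝ) (n : ℕ) :
    ∃ k, (auxL ℓ₀ ℓ₁ ρ k).length ≤ n ∧ n < (auxL ℓ₀ ℓ₁ ρ (k + 1)).length := by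
  induction n with
  | zero =>
    refine ⟨0, by simp [auxL], ?_⟩
    have := auxL_len_lt ℓ₀ ℓ₁ ρ 0
    simpa [auxL] using this
  | succ n ih =>
    obtain ⟨k, hk1, hk2⟩ := ih
    by_cases h : n + 1 < (auxL ℓ₀ ℓ₁ ρ (k + 1)).length
    · exact ⟨k, by omega, h⟩
    · have := auxL_len_lt ℓ₀ ℓ₁ ρ (k + 1)
      exact ⟨k + 1, by omega, by omega⟩

/-- φ_b maps the Sturmian word with parameters (ℓ₀, ℓ₁, ρ) to the Sturmian word
with parameters (ℓ₀ + ℓ₁, ℓ₁, ρ). -/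
theorem phiB_image_of_iet_coding (ℓ₀ ℓ₁ : ℝ) (h₀ : 0 < ℓ₀) (h₁ : 0 < ℓ₁)
    (ρ : ℝ) (hρ : ρ ∈ Set.Ico (0 : ℝ) (ℓ₀ + ℓ₁)) :
    imw phiB (ietCoding ℓ₀ ℓ₁ ρ) = ietCoding (ℓ₀ + ℓ₁) ℓ₁ ρ := by
  obtain ⟨hρ0, hρ1⟩ := hρ
  funext n
  obtain ⟨k, hk1, hk2⟩ := exists_block ℓ₀ ℓ₁ ρ n
  have hkn : k ≤ n := le_trans (auxL_len_ge ℓ₀ ℓ₁ ρ k) hk1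
  have hL : imw phiB (ietCoding ℓ₀ ℓ₁ ρ) n
      = (phiB (ietCoding ℓ₀ ℓ₁ ρ k)).getD (n - (auxL ℓ₀ ℓ₁ ρ k).length) false := by
    obtain ⟨t, ht⟩ := auxL_prefix ℓ₀ ℓ₁ ρ (k + 1) (n - k)
    have hn1 : (k + 1) + (n - k) = n + 1 := by omega
    have h0 : imw phiB (ietCoding ℓ₀ ℓ₁ ρ) n = (auxL ℓ₀ ℓ₁ ρ (n + 1)).getD n false := rfl
    rw [h0, ← hn1, ht, List.getD_append _ _ _ _ hk2, auxL_succ,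
      List.getD_append_right _ _ _ _ hk1]
  obtain ⟨ha, hb⟩ := iet_orbit_mem ℓ₀ ℓ₁ h₀ h₁ ρ hρ0 hρ1 k
  have hsync := iterate_sync ℓ₀ ℓ₁ h₀ h₁ ρ hρ0 hρ1 k
  by_cases h : (iet ℓ₀ ℓ₁)^[k] ρ < ℓ₀
  · have huk : ietCoding ℓ₀ ℓ₁ ρ k = false := by simp [ietCoding, h]
    have hlen : (auxL ℓ₀ ℓ₁ ρ (k + 1)).length = (auxL ℓ₀ ℓ₁ ρ k).length + 1 := by
      rw [auxL_succ, huk]; simp [phiB]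
    have hn : n = (auxL ℓ₀ ℓ₁ ρ k).length := by omega
    rw [hL, huk, hn]
    simp only [Nat.sub_self, phiB]
    show false = ietCoding (ℓ₀ + ℓ₁) ℓ₁ ρ _
    rw [ietCoding]
    rw [if_pos (by rw [hsync]; linarith)]
  · have huk : ietCoding ℓ₀ ℓ₁ ρ k = true := by simp [ietCoding, h]
    have hlen : (auxL ℓ₀ ℓ₁ ρ (k + 1)).length = (auxL ℓ₀ ℓ₁ ρ k).length + 2 := by
      rw [auxL_succ, huk]; simp [phiB]
    rw [hL, huk]
    rcases (by omega : n = (auxL ℓ₀ ℓ₁ ρ k).length ∨ n = (auxL ℓ₀ ℓ₁ ρ k).length + 1) with hn | hn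
    · rw [hn]
      simp only [Nat.sub_self, phiB]
      show false = ietCoding (ℓ₀ + ℓ₁) ℓ₁ ρ _
      rw [ietCoding]
      rw [if_pos (by rw [hsync]; linarith)]
    · rw [hn]
      simp only [Nat.add_sub_cancel_left, phiB]
      show true = ietCoding (ℓ₀ + ℓ₁) ℓ₁ ρ _
      rw [ietCoding]
      have heq : (iet (ℓ₀ + ℓ₁) ℓ₁)^[(auxL ℓ₀ ℓ₁ ρ k).length + 1] ρ
          = (iet ℓ₀ ℓ₁)^[k] ρ + ℓ₁ := by
        rw [Function.iterate_succ_apply', hsync, iet_apply, if_pos (by linarith)]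
      rw [if_neg (by rw [heq]; push_neg; linarith)]
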